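/- Define b(i) to be the number of natural numbers m with ⌊m(√2 − 1)⌋ = i + 1. Then for every integer t ≥ 1, if b(t − 1) = 2 and there is no natural number n with t + 5 = ⌈(n+2)(√2 + 1)⌉ (i.e., t is not a partial sum b(1) + ⋯ + b(n)), then b(t) = 3. -/

import Mathlib

/-! Counting the `m` with `⌊m r⌋ = j` gives `b i = ⌈(i+2)δ⌉₊ - ⌈(i+1)δ⌉₊` for `δ = (√2 - 1)⁻¹ = √2 + 1`,
so `b i ∈ {2, 3}` because `2 < δ < 3`. If `b (t-1) = b t = 2`, then `⌈(t+2)δ⌉₊ = ⌈tδ⌉₊ + 4`, and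
`δ² = 2δ + 1` turns the resulting bounds on `A = ⌈tδ⌉₊` into `t + 4 < (A - 2t + 1)δ ≤ t + 5`,
i.e. `t + 5 = ⌈(n+2)δ⌉` for `n = A - 2t - 1`. -/

section Floor

variable {K : Type*} [Field K] [LinearOrder K] [IsStrictOrderedRing K] [FloorRing K]

lemma ncard_floor_mul_eq {r : K} (hr : 0 < r) (j : ℕ) :
    {m : ℕ | ⌊(m : K) * r⌋ = j}.ncard = ⌈(j + 1) / r⌉₊ - ⌈j / r⌉₊ := by
  have : {m : ℕ | ⌊(m : K) * r⌋ = j} = Finset.Ico ⌈j / r⌉₊ ⌈(j + 1) / r⌉₊ := by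
    ext m
    simp only [Set.mem_ofPred_eq, Finset.coe_Ico, Set.mem_Ico, Int.floor_eq_iff, Nat.ceil_le,
      Nat.lt_ceil, div_le_iff₀ hr, lt_div_iff₀ hr]
    push_cast
    rfl
  rw [this, Set.ncard_coe_finset, Nat.card_Ico]

lemma ceil_add_natCast_le_ceil_add {x a : K} {n : ℕ} (hx : 0 ≤ x) (hn : n ≤ a) :
    ⌈x⌉₊ + n ≤ ⌈x + a⌉₊ := by
  rw [← Nat.ceil_add_natCast hx]
  exact Nat.ceil_mono (add_le_add_right hn x)

lemma ceil_add_le_ceil_add_natCast {x a : K} {n : ℕ} (hx : 0 ≤ x) (ha : a ≤ n) :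
    ⌈x + a⌉₊ ≤ ⌈x⌉₊ + n := by
  rw [← Nat.ceil_add_natCast hx]
  exact Nat.ceil_mono (add_le_add_right ha x)

end Floor

local notation "δ" => Real.sqrt 2 + 1

lemma sqrt_two_add_one_sq : δ ^ 2 = 2 * δ + 1 := by
  nlinarith [Real.sq_sqrt (show (0 : ℝ) ≤ 2 by norm_num)]

lemma two_lt_sqrt_two_add_one : 2 < δ := by
  have : 1 < Real.sqrt 2 := Real.lt_sqrt_of_sq_lt (by norm_num)
  linarith

lemma sqrt_two_add_one_lt : δ < 5 / 2 := by
  have : Real.sqrt 2 < 3 / 2 := by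
    rw [Real.sqrt_lt' (by norm_num)]
    norm_num
  linarith

lemma inv_sqrt_two_sub_one : (Real.sqrt 2 - 1)⁻¹ = δ :=
  inv_eq_of_mul_eq_one_right (by nlinarith [Real.sq_sqrt (show (0 : ℝ) ≤ 2 by norm_num)])

lemma ncard_floor_mul_sqrt_two_sub_one (i : ℕ) :
    {m : ℕ | ⌊(m : ℝ) * (Real.sqrt 2 - 1)⌋ = (i : ℤ) + 1}.ncard
      = ⌈((i : ℝ) + 2) * δ⌉₊ - ⌈((i : ℝ) + 1) * δ⌉₊ := by
  have := ncard_floor_mul_eq (r := Real.sqrt 2 - 1) (by linarith [two_lt_sqrt_two_add_one]) (i + 1)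
  push_cast [div_eq_mul_inv, inv_sqrt_two_sub_one] at this
  rw [this, add_assoc, one_add_one_eq_two]

lemma ceil_add_one_mul_sqrt_two_add_one_bounds {x : ℝ} (hx : 0 ≤ x) :
    ⌈x * δ⌉₊ + 2 ≤ ⌈(x + 1) * δ⌉₊ ∧ ⌈(x + 1) * δ⌉₊ ≤ ⌈x * δ⌉₊ + 3 := by
  have hxδ : 0 ≤ x * δ := by positivity
  rw [add_one_mul]
  exact ⟨ceil_add_natCast_le_ceil_add hxδ (by push_cast; linarith [two_lt_sqrt_two_add_one]),
    ceil_add_le_ceil_add_natCast hxδ (by push_cast; linarith [sqrt_two_add_one_lt])⟩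

lemma exists_ceil_eq_of_ceil_add_two_mul {t : ℕ} (ht : 1 ≤ t)
    (h : ⌈((t : ℝ) + 2) * δ⌉₊ = ⌈(t : ℝ) * δ⌉₊ + 4) :
    ∃ n : ℕ, (t : ℤ) + 5 = ⌈((n : ℝ) + 2) * δ⌉ := by
  set A := ⌈(t : ℝ) * δ⌉₊
  have hδ := two_lt_sqrt_two_add_one
  have ht' : (1 : ℝ) ≤ t := by exact_mod_cast ht
  have hA : (A : ℝ) < t * δ + 1 := Nat.ceil_lt_add_one (by positivity)
  have hC : ((t : ℝ) + 2) * δ ≤ A + 4 := by exact_mod_cast h ▸ Nat.le_ceil _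
  have h2t : 2 * t < A := Nat.lt_ceil.2 (by push_cast; nlinarith)
  have hsq : (t : ℝ) * δ ^ 2 = t * (2 * δ + 1) := by rw [sqrt_two_add_one_sq]
  refine ⟨A - 2 * t - 1, ?_⟩
  have hn : ((A - 2 * t - 1 : ℕ) : ℝ) + 2 = A - 2 * t + 1 := by
    rw [Nat.cast_sub (by omega), Nat.cast_sub (by omega)]
    push_cast
    ring
  rw [eq_comm, Int.ceil_eq_iff, hn]
  push_cast
  constructor
  · nlinarith [mul_le_mul_of_nonneg_right hC (by positivity : (0 : ℝ) ≤ δ), sqrt_two_add_one_sq]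
  · nlinarith [mul_le_mul_of_nonneg_right hA.le (by positivity : (0 : ℝ) ≤ δ), sqrt_two_add_one_lt]

/-- With `b(i)` the number of `m` with `⌊m(√2−1)⌋ = i+1`: if `b(t−1) = 2` and
`t` is not a partial sum `b(1) + ⋯ + b(n)` (equivalently, `t + 5` is never
`⌈(n+2)(√2+1)⌉`), then `b(t) = 3`. -/
theorem b_after_two
    (b : ℕ → ℕ)
    (hb : ∀ i : ℕ, b i = {m : ℕ | ⌊(m : ℝ) * (Real.sqrt 2 - 1)⌋ = (i : ℤ) + 1}.ncard) :
    ∀ t : ℕ, 1 ≤ t → b (t - 1) = 2 →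
      (¬∃ n : ℕ, (t : ℤ) + 5 = ⌈((n : ℝ) + 2) * (Real.sqrt 2 + 1)⌉) →
      b t = 3 := by
  intro t ht h2 hne
  rw [hb, ncard_floor_mul_sqrt_two_sub_one, Nat.cast_pred ht, sub_add_cancel,
    show (t : ℝ) - 1 + 2 = t + 1 by ring] at h2
  rw [hb, ncard_floor_mul_sqrt_two_sub_one]
  have gap₁ := ceil_add_one_mul_sqrt_two_add_one_bounds (x := t) (by positivity)
  have gap₂ := ceil_add_one_mul_sqrt_two_add_one_bounds (x := t + 1) (by positivity)
  rw [add_assoc, one_add_one_eq_two] at gap₂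
  by_contra h3
  exact hne (exists_ceil_eq_of_ceil_add_two_mul ht (by omega))
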